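/- Let (A, H, φ, ψ, ρ, γ, P, Q) be a cycle cross coproduct system. Then E = A⊕H with the comultiplication Δ_E(a) = Δ_A(a) + φ(a) + ψ(a) + P(a) for a in A and Δ_E(x) = Δ_H(x) + ρ(x) + γ(x) + Q(x) for x in H is an anti-flexible coalgebra (the cycle cross coproduct anti-flexible coalgebra A^P #^Q H). -/
import Mathlib


open TensorProduct LinearMap

namespace AntiFlexible

section Basic

variable (K : Type*) [Field K] [CharZero K]
variable (M N P : Type*)
variable [AddCommGroup M] [Module K M] [AddCommGroup N] [Module K N] [AddCommGroup P] [Module K P]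

/-- The flip map `τ : M ⊗ N → N ⊗ M`. -/
noncomputable def τ : M ⊗[K] N →ₗ[K] N ⊗[K] M := (TensorProduct.comm K M N).toLinearMap

/-- `τ₁₃ : (M ⊗ N) ⊗ P → (P ⊗ N) ⊗ M`, exchanging the outer tensor factors. -/
noncomputable def τ₁₃ : (M ⊗[K] N) ⊗[K] P →ₗ[K] (P ⊗[K] N) ⊗[K] M :=
  (TensorProduct.assoc K P N M).symm.toLinearMap ∘ₗ
    (lTensor P (τ K M N)) ∘ₗ (TensorProduct.comm K (M ⊗[K] N) P).toLinearMap

/-- The reassociator `M ⊗ (N ⊗ P) → (M ⊗ N) ⊗ P`. -/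
noncomputable def α : M ⊗[K] (N ⊗[K] P) →ₗ[K] (M ⊗[K] N) ⊗[K] P :=
  (TensorProduct.assoc K M N P).symm.toLinearMap

/-- The antisymmetrizer `id - τ` on `M ⊗ M`. -/
noncomputable def ω : M ⊗[K] M →ₗ[K] M ⊗[K] M := LinearMap.id - τ K M M

end Basic

section Structures

variable {K : Type*} [Field K] [CharZero K]
variable {A H V : Type*}
variable [AddCommGroup A] [Module K A] [AddCommGroup H] [Module K H]
variable [AddCommGroup V] [Module K V]

/-- Anti-flexible algebra: `(ab)c - a(bc) = (cb)a - c(ba)`. -/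
def IsAFAlgebra (m : A →ₗ[K] A →ₗ[K] A) : Prop :=
  ∀ a b c, m (m a b) c - m a (m b c) = m (m c b) a - m c (m b a)

/-- The coassociativity defect `(Δ ⊗ id)Δ - (id ⊗ Δ)Δ`, viewed in `(A ⊗ A) ⊗ A`. -/
noncomputable def coassocDefect (Δ : A →ₗ[K] A ⊗[K] A) : A →ₗ[K] (A ⊗[K] A) ⊗[K] A :=
  (rTensor A Δ) ∘ₗ Δ - (α K A A A) ∘ₗ (lTensor A Δ) ∘ₗ Δ

/-- Anti-flexible coalgebra: the coassociativity defect is `τ₁₃`-invariant. -/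
def IsAFCoalgebra (Δ : A →ₗ[K] A ⊗[K] A) : Prop :=
  ∀ a, coassocDefect Δ a = τ₁₃ K A A A (coassocDefect Δ a)

/-- Anti-flexible bialgebra. -/
def IsAFBialgebra (m : A →ₗ[K] A →ₗ[K] A) (Δ : A →ₗ[K] A ⊗[K] A) : Prop :=
  IsAFAlgebra m ∧ IsAFCoalgebra Δ ∧
  (∀ a b, Δ (m a b) + τ K A A (Δ (m b a)) =
      rTensor A (m b) (τ K A A (Δ a)) + lTensor A (m.flip a) (τ K A A (Δ b))
      + rTensor A (m.flip b) (Δ a) + lTensor A (m a) (Δ b)) ∧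
  (∀ a b, ω K A (lTensor A (m.flip b) (Δ a) - rTensor A (m b) (Δ a)
      - lTensor A (m.flip a) (Δ b) + rTensor A (m a) (Δ b)) = 0)

/-- `V` is a bimodule over the anti-flexible algebra `(H, m)` via `tr = ▷` and `tl = ◁`. -/
def IsAFBimodule (m : H →ₗ[K] H →ₗ[K] H)
    (tr : H →ₗ[K] V →ₗ[K] V) (tl : V →ₗ[K] H →ₗ[K] V) : Prop :=
  (∀ x y v, tr (m x y) v - tr x (tr y v) = tl (tl v y) x - tl v (m y x)) ∧
  (∀ x y v, tl (tr x v) y - tr x (tl v y) = tl (tr y v) x - tr y (tl v x))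

/-- `V` is a bicomodule over the anti-flexible coalgebra `(H, Δ)` via `φ` and `ψ`. -/
def IsAFBicomodule (Δ : H →ₗ[K] H ⊗[K] H)
    (φ : V →ₗ[K] H ⊗[K] V) (ψ : V →ₗ[K] V ⊗[K] H) : Prop :=
  (∀ v, rTensor V Δ (φ v) - α K H H V (lTensor H φ (φ v))
      = τ₁₃ K V H H (rTensor H ψ (ψ v) - α K V H H (lTensor V Δ (ψ v)))) ∧
  (∀ v, rTensor H φ (ψ v) - α K H V H (lTensor H ψ (φ v))
      = τ₁₃ K H V H (rTensor H φ (ψ v) - α K H V H (lTensor H ψ (φ v))))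

/-- Anti-flexible Hopf bimodule over `(H, m, Δ)`, with conditions (HM1)-(HM3). -/
def IsAFHopfBimodule (m : H →ₗ[K] H →ₗ[K] H) (Δ : H →ₗ[K] H ⊗[K] H)
    (tr : H →ₗ[K] V →ₗ[K] V) (tl : V →ₗ[K] H →ₗ[K] V)
    (φ : V →ₗ[K] H ⊗[K] V) (ψ : V →ₗ[K] V ⊗[K] H) : Prop :=
  IsAFBimodule m tr tl ∧ IsAFBicomodule Δ φ ψ ∧
  -- (HM1)
  (∀ x v, φ (tr x v) + τ K V H (ψ (tl v x))
      = lTensor H (tr x) (φ v) + lTensor H (tl.flip x) (τ K V H (ψ v))) ∧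
  -- (HM2)
  (∀ x v, ψ (tr x v) + τ K H V (φ (tl v x))
      = rTensor H (tr.flip v) (Δ x) + lTensor V (m x) (ψ v)
      + lTensor V (m.flip x) (τ K H V (φ v)) + rTensor H (tl v) (τ K H H (Δ x))) ∧
  -- (HM3)
  (∀ x v, rTensor H (tr x) (ψ v) - rTensor H (tl v) (Δ x) - lTensor V (m.flip x) (ψ v)
      = τ K H V (- lTensor H (tl.flip x) (φ v) + rTensor V (m x) (φ v)
        + lTensor H (tr.flip v) (Δ x)))

/-- `A` is a braided anti-flexible bialgebra over `(H, mH, ΔH)`: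
an anti-flexible algebra and coalgebra in the category of anti-flexible Hopf bimodules,
satisfying (BB1) and (BB2). -/
def IsBraidedAFBialgebra (mA : A →ₗ[K] A →ₗ[K] A) (ΔA : A →ₗ[K] A ⊗[K] A)
    (mH : H →ₗ[K] H →ₗ[K] H) (ΔH : H →ₗ[K] H ⊗[K] H)
    (tr : H →ₗ[K] A →ₗ[K] A) (tl : A →ₗ[K] H →ₗ[K] A)
    (φ : A →ₗ[K] H ⊗[K] A) (ψ : A →ₗ[K] A ⊗[K] H) : Prop :=
  IsAFAlgebra mA ∧ IsAFCoalgebra ΔA ∧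
  IsAFHopfBimodule mH ΔH tr tl φ ψ ∧
  -- H-bimodule algebra
  (∀ x a b, mA (tr x a) b - tr x (mA a b) = tl (mA b a) x - mA b (tl a x)) ∧
  (∀ x a b, mA a (tr x b) - mA (tl a x) b = mA b (tr x a) - mA (tl b x) a) ∧
  -- H-bimodule coalgebra
  (∀ x b, ΔA (tr x b) + τ K A A (ΔA (tl b x))
      = lTensor A (tl.flip x) (τ K A A (ΔA b)) + lTensor A (tr x) (ΔA b)) ∧
  (∀ x b, ω K A (rTensor A (tr x) (ΔA b) - lTensor A (tl.flip x) (ΔA b)) = 0) ∧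
  -- H-bicomodule algebra
  (∀ a b, φ (mA a b) + τ K A H (ψ (mA b a))
      = lTensor H (mA a) (φ b) + lTensor H (mA.flip a) (τ K A H (ψ b))) ∧
  (∀ a b, lTensor H (mA.flip b) (φ a) - lTensor H (mA.flip a) (φ b)
      = τ K A H (rTensor H (mA a) (ψ b) - rTensor H (mA b) (ψ a))) ∧
  -- H-bicomodule coalgebra
  (∀ a, rTensor A φ (ΔA a) - α K H A A (lTensor H ΔA (φ a))
      = τ₁₃ K A A H (rTensor H ΔA (ψ a) - α K A A H (lTensor A ψ (ΔA a)))) ∧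
  (∀ a, rTensor A ψ (ΔA a) - α K A H A (lTensor A φ (ΔA a))
      = τ₁₃ K A H A (rTensor A ψ (ΔA a) - α K A H A (lTensor A φ (ΔA a)))) ∧
  -- (BB1)
  (∀ a b, ΔA (mA a b) + τ K A A (ΔA (mA b a))
      = rTensor A (mA.flip b) (ΔA a) + rTensor A (mA b) (τ K A A (ΔA a))
      + lTensor A (mA a) (ΔA b) + lTensor A (mA.flip a) (τ K A A (ΔA b))
      + rTensor A (tr.flip b) (φ a) + rTensor A (tl b) (τ K A H (ψ a))
      + lTensor A (tl a) (ψ b) + lTensor A (tr.flip a) (τ K H A (φ b))) ∧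
  -- (BB2)
  (∀ a b, ω K A (lTensor A (mA.flip b) (ΔA a) - rTensor A (mA b) (ΔA a)
        - lTensor A (mA.flip a) (ΔA b) + rTensor A (mA a) (ΔA b))
      + ω K A (lTensor A (tr.flip b) (ψ a) - rTensor A (tl b) (φ a)
        - lTensor A (tr.flip a) (ψ b) + rTensor A (tl a) (φ b)) = 0)

/-- The (cocycle) cross product multiplication on `A × H`:
`(a,x)(b,y) = (ab + x⇀b + a↼y + σ(x,y), xy + x◁b + a▷y + θ(a,b))`,
where `tr = ⇀`, `tl = ↼`, `sr = ▷`, `sl = ◁`. -/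
noncomputable def prodMul (mA : A →ₗ[K] A →ₗ[K] A) (mH : H →ₗ[K] H →ₗ[K] H)
    (tr : H →ₗ[K] A →ₗ[K] A) (tl : A →ₗ[K] H →ₗ[K] A)
    (sr : A →ₗ[K] H →ₗ[K] H) (sl : H →ₗ[K] A →ₗ[K] H)
    (σ : H →ₗ[K] H →ₗ[K] A) (θ : A →ₗ[K] A →ₗ[K] H) :
    (A × H) →ₗ[K] (A × H) →ₗ[K] (A × H) :=
  ((mA ∘ₗ fst K A H).compl₂ (fst K A H) + (tr ∘ₗ snd K A H).compl₂ (fst K A H)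
    + (tl ∘ₗ fst K A H).compl₂ (snd K A H)
    + (σ ∘ₗ snd K A H).compl₂ (snd K A H)).compr₂ (inl K A H)
  + ((mH ∘ₗ snd K A H).compl₂ (snd K A H) + (sl ∘ₗ snd K A H).compl₂ (fst K A H)
    + (sr ∘ₗ fst K A H).compl₂ (snd K A H)
    + (θ ∘ₗ fst K A H).compl₂ (fst K A H)).compr₂ (inr K A H)

/-- The (cycle) cross coproduct comultiplication on `A × H`:
`Δ(a) = Δ_A(a) + φ(a) + ψ(a) + P(a)` and `Δ(x) = Δ_H(x) + ρ(x) + γ(x) + Q(x)`. -/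
noncomputable def prodComul (ΔA : A →ₗ[K] A ⊗[K] A) (ΔH : H →ₗ[K] H ⊗[K] H)
    (φ : A →ₗ[K] H ⊗[K] A) (ψ : A →ₗ[K] A ⊗[K] H)
    (ρ : H →ₗ[K] A ⊗[K] H) (γ : H →ₗ[K] H ⊗[K] A)
    (P : A →ₗ[K] H ⊗[K] H) (Q : H →ₗ[K] A ⊗[K] A) :
    (A × H) →ₗ[K] (A × H) ⊗[K] (A × H) :=
  (TensorProduct.map (inl K A H) (inl K A H)) ∘ₗ ΔA ∘ₗ fst K A H
  + (TensorProduct.map (inr K A H) (inl K A H)) ∘ₗ φ ∘ₗ fst K A H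
  + (TensorProduct.map (inl K A H) (inr K A H)) ∘ₗ ψ ∘ₗ fst K A H
  + (TensorProduct.map (inr K A H) (inr K A H)) ∘ₗ P ∘ₗ fst K A H
  + (TensorProduct.map (inr K A H) (inr K A H)) ∘ₗ ΔH ∘ₗ snd K A H
  + (TensorProduct.map (inl K A H) (inr K A H)) ∘ₗ ρ ∘ₗ snd K A H
  + (TensorProduct.map (inr K A H) (inl K A H)) ∘ₗ γ ∘ₗ snd K A H
  + (TensorProduct.map (inl K A H) (inl K A H)) ∘ₗ Q ∘ₗ snd K A H

/-- The linear map `(a, x) ↦ (a + r(x), s(x))` on `A × V`. -/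
noncomputable def phiRS (r : V →ₗ[K] A) (s : V →ₗ[K] V) : (A × V) →ₗ[K] (A × V) :=
  (fst K A V + r ∘ₗ snd K A V).prod (s ∘ₗ snd K A V)

end Structures

end AntiFlexible

open AntiFlexible

namespace AntiFlexible

section AuxCCC
set_option linter.unusedSectionVars false
variable {K : Type*} [Field K] [CharZero K]

section Nat
variable {X Y Z X' Y' Z' : Type*}
variable [AddCommGroup X] [Module K X] [AddCommGroup Y] [Module K Y] [AddCommGroup Z] [Module K Z]
variable [AddCommGroup X'] [Module K X'] [AddCommGroup Y'] [Module K Y'] [AddCommGroup Z'] [Module K Z']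

lemma tau13_tmul (x : X) (y : Y) (z : Z) :
    τ₁₃ K X Y Z ((x ⊗ₜ y) ⊗ₜ z) = (z ⊗ₜ y) ⊗ₜ x := by
  simp [τ₁₃, τ]

lemma tau13_nat (f : X →ₗ[K] X') (g : Y →ₗ[K] Y') (h : Z →ₗ[K] Z')
    (t : (X ⊗[K] Y) ⊗[K] Z) :
    τ₁₃ K X' Y' Z' (TensorProduct.map (TensorProduct.map f g) h t)
      = TensorProduct.map (TensorProduct.map h g) f (τ₁₃ K X Y Z t) := by
  have : τ₁₃ K X' Y' Z' ∘ₗ TensorProduct.map (TensorProduct.map f g) h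
      = TensorProduct.map (TensorProduct.map h g) f ∘ₗ τ₁₃ K X Y Z := by
    apply TensorProduct.ext_threefold
    intro x y z
    simp [tau13_tmul]
  exact DFunLike.congr_fun this t

lemma tau13_invol (t : (X ⊗[K] Y) ⊗[K] Z) :
    τ₁₃ K Z Y X (τ₁₃ K X Y Z t) = t := by
  have : (τ₁₃ K Z Y X) ∘ₗ (τ₁₃ K X Y Z) = LinearMap.id := by
    apply TensorProduct.ext_threefold
    intro x y z
    simp [tau13_tmul]
  exact DFunLike.congr_fun this t

lemma alpha_tmul (f : X →ₗ[K] X') (g : Y →ₗ[K] Y') (h : Z →ₗ[K] Z') (x : X) (s : Y ⊗[K] Z) :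
    α K X' Y' Z' (f x ⊗ₜ[K] TensorProduct.map g h s)
      = TensorProduct.map (TensorProduct.map f g) h (α K X Y Z (x ⊗ₜ[K] s)) := by
  rw [show f x ⊗ₜ[K] TensorProduct.map g h s
      = TensorProduct.map f (TensorProduct.map g h) (x ⊗ₜ s) from rfl]
  exact (TensorProduct.map_map_assoc_symm f g h (x ⊗ₜ s)).symm

end Nat

variable {A H W : Type*}
variable [AddCommGroup A] [Module K A] [AddCommGroup H] [Module K H] [AddCommGroup W] [Module K W]
variable (ΔA : A →ₗ[K] A ⊗[K] A) (ΔH : H →ₗ[K] H ⊗[K] H)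
    (φ : A →ₗ[K] H ⊗[K] A) (ψ : A →ₗ[K] A ⊗[K] H)
    (ρ : H →ₗ[K] A ⊗[K] H) (γ : H →ₗ[K] H ⊗[K] A)
    (P : A →ₗ[K] H ⊗[K] H) (Q : H →ₗ[K] A ⊗[K] A)

lemma comul_inl (a : A) :
    prodComul ΔA ΔH φ ψ ρ γ P Q (inl K A H a)
    = TensorProduct.map (inl K A H) (inl K A H) (ΔA a)
      + TensorProduct.map (inr K A H) (inl K A H) (φ a)
      + TensorProduct.map (inl K A H) (inr K A H) (ψ a)
      + TensorProduct.map (inr K A H) (inr K A H) (P a) := by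
  simp [prodComul]

lemma comul_inr (x : H) :
    prodComul ΔA ΔH φ ψ ρ γ P Q (inr K A H x)
    = TensorProduct.map (inr K A H) (inr K A H) (ΔH x)
      + TensorProduct.map (inl K A H) (inr K A H) (ρ x)
      + TensorProduct.map (inr K A H) (inl K A H) (γ x)
      + TensorProduct.map (inl K A H) (inl K A H) (Q x) := by
  simp [prodComul]

lemma expand_r_inl (jW : W →ₗ[K] A × H) (t : A ⊗[K] W) :
    rTensor (A × H) (prodComul ΔA ΔH φ ψ ρ γ P Q)
        (TensorProduct.map (inl K A H) jW t)
    = TensorProduct.map (TensorProduct.map (inl K A H) (inl K A H)) jW (rTensor W ΔA t)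
      + TensorProduct.map (TensorProduct.map (inr K A H) (inl K A H)) jW (rTensor W φ t)
      + TensorProduct.map (TensorProduct.map (inl K A H) (inr K A H)) jW (rTensor W ψ t)
      + TensorProduct.map (TensorProduct.map (inr K A H) (inr K A H)) jW (rTensor W P t) := by
  induction t using TensorProduct.induction_on with
  | zero => simp
  | tmul a w => simp only [TensorProduct.map_tmul, rTensor_tmul, comul_inl, TensorProduct.add_tmul]
  | add u v hu hv => simp only [map_add, hu, hv]; abel

lemma expand_r_inr (jW : W →ₗ[K] A × H) (t : H ⊗[K] W) :
    rTensor (A × H) (prodComul ΔA ΔH φ ψ ρ γ P Q)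
        (TensorProduct.map (inr K A H) jW t)
    = TensorProduct.map (TensorProduct.map (inr K A H) (inr K A H)) jW (rTensor W ΔH t)
      + TensorProduct.map (TensorProduct.map (inl K A H) (inr K A H)) jW (rTensor W ρ t)
      + TensorProduct.map (TensorProduct.map (inr K A H) (inl K A H)) jW (rTensor W γ t)
      + TensorProduct.map (TensorProduct.map (inl K A H) (inl K A H)) jW (rTensor W Q t) := by
  induction t using TensorProduct.induction_on with
  | zero => simp
  | tmul x w => simp only [TensorProduct.map_tmul, rTensor_tmul, comul_inr, TensorProduct.add_tmul]
  | add u v hu hv => simp only [map_add, hu, hv]; abel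

lemma expand_l_inl (jW : W →ₗ[K] A × H) (t : W ⊗[K] A) :
    α K (A × H) (A × H) (A × H) (lTensor (A × H) (prodComul ΔA ΔH φ ψ ρ γ P Q)
        (TensorProduct.map jW (inl K A H) t))
    = TensorProduct.map (TensorProduct.map jW (inl K A H)) (inl K A H) (α K W A A (lTensor W ΔA t))
      + TensorProduct.map (TensorProduct.map jW (inr K A H)) (inl K A H) (α K W H A (lTensor W φ t))
      + TensorProduct.map (TensorProduct.map jW (inl K A H)) (inr K A H) (α K W A H (lTensor W ψ t))
      + TensorProduct.map (TensorProduct.map jW (inr K A H)) (inr K A H) (α K W H H (lTensor W P t)) := by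
  induction t using TensorProduct.induction_on with
  | zero => simp
  | tmul w a =>
    simp only [TensorProduct.map_tmul, lTensor_tmul, comul_inl, TensorProduct.tmul_add,
      map_add, alpha_tmul]
  | add u v hu hv => simp only [map_add, hu, hv]; abel

lemma expand_l_inr (jW : W →ₗ[K] A × H) (t : W ⊗[K] H) :
    α K (A × H) (A × H) (A × H) (lTensor (A × H) (prodComul ΔA ΔH φ ψ ρ γ P Q)
        (TensorProduct.map jW (inr K A H) t))
    = TensorProduct.map (TensorProduct.map jW (inr K A H)) (inr K A H) (α K W H H (lTensor W ΔH t))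
      + TensorProduct.map (TensorProduct.map jW (inl K A H)) (inr K A H) (α K W A H (lTensor W ρ t))
      + TensorProduct.map (TensorProduct.map jW (inr K A H)) (inl K A H) (α K W H A (lTensor W γ t))
      + TensorProduct.map (TensorProduct.map jW (inl K A H)) (inl K A H) (α K W A A (lTensor W Q t)) := by
  induction t using TensorProduct.induction_on with
  | zero => simp
  | tmul w x =>
    simp only [TensorProduct.map_tmul, lTensor_tmul, comul_inr, TensorProduct.tmul_add,
      map_add, alpha_tmul]
  | add u v hu hv => simp only [map_add, hu, hv]; abel

end AuxCCC

end AntiFlexible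



lemma coassocDefect_apply' {K M : Type*} [Field K] [CharZero K] [AddCommGroup M] [Module K M]
    (Δ : M →ₗ[K] M ⊗[K] M) (m : M) :
    coassocDefect Δ m = rTensor M Δ (Δ m) - α K M M M (lTensor M Δ (Δ m)) := rfl

set_option maxHeartbeats 4000000 in
/-- the cycle cross coproduct of a cycle cross coproduct system
is an anti-flexible coalgebra. -/
theorem cycle_cross_coproduct_coalgebra
    (K A H : Type*) [Field K] [CharZero K]
    [AddCommGroup A] [Module K A] [AddCommGroup H] [Module K H]
    (ΔA : A →ₗ[K] A ⊗[K] A) (ΔH : H →ₗ[K] H ⊗[K] H)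
    (φ : A →ₗ[K] H ⊗[K] A) (ψ : A →ₗ[K] A ⊗[K] H)
    (ρ : H →ₗ[K] A ⊗[K] H) (γ : H →ₗ[K] H ⊗[K] A)
    (P : A →ₗ[K] H ⊗[K] H) (Q : H →ₗ[K] A ⊗[K] A)
    -- (CC3)
    (hCC3 : ∀ a : A,
      rTensor H ΔH (P a) - α K H H H (lTensor H ΔH (P a))
        + rTensor H P (ψ a) - α K H H H (lTensor H P (φ a))
      = τ₁₃ K H H H (rTensor H ΔH (P a) - α K H H H (lTensor H ΔH (P a))
        + rTensor H P (ψ a) - α K H H H (lTensor H P (φ a))))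
    -- (CC4)
    (hCC4 : ∀ x : H,
      rTensor A ΔA (Q x) - α K A A A (lTensor A ΔA (Q x))
        + rTensor A Q (γ x) - α K A A A (lTensor A Q (ρ x))
      = τ₁₃ K A A A (rTensor A ΔA (Q x) - α K A A A (lTensor A ΔA (Q x))
        + rTensor A Q (γ x) - α K A A A (lTensor A Q (ρ x))))
    -- (CC7)
    (hCC7 : ∀ x : H,
      rTensor H ΔH (ΔH x) - α K H H H (lTensor H ΔH (ΔH x))
        + rTensor H P (ρ x) - α K H H H (lTensor H P (γ x))
      = τ₁₃ K H H H (rTensor H ΔH (ΔH x) - α K H H H (lTensor H ΔH (ΔH x))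
        + rTensor H P (ρ x) - α K H H H (lTensor H P (γ x))))
    -- (CC8)
    (hCC8 : ∀ a : A,
      rTensor A ΔA (ΔA a) - α K A A A (lTensor A ΔA (ΔA a))
        + rTensor A Q (φ a) - α K A A A (lTensor A Q (ψ a))
      = τ₁₃ K A A A (rTensor A ΔA (ΔA a) - α K A A A (lTensor A ΔA (ΔA a))
        + rTensor A Q (φ a) - α K A A A (lTensor A Q (ψ a))))
    -- (CCP1)
    (hCCP1 : ∀ a : A,
      rTensor A φ (ΔA a) + rTensor A γ (φ a) - α K H A A (lTensor H ΔA (φ a))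
        - α K H A A (lTensor H Q (P a))
      = τ₁₃ K A A H (rTensor H ΔA (ψ a) + rTensor H Q (P a)
        - α K A A H (lTensor A ψ (ΔA a)) - α K A A H (lTensor A ρ (ψ a))))
    -- (CCP2)
    (hCCP2 : ∀ a : A,
      rTensor A ψ (ΔA a) + rTensor A ρ (φ a)
        - α K A H A (lTensor A φ (ΔA a)) - α K A H A (lTensor A γ (ψ a))
      = τ₁₃ K A H A (rTensor A ψ (ΔA a) + rTensor A ρ (φ a)
        - α K A H A (lTensor A φ (ΔA a)) - α K A H A (lTensor A γ (ψ a))))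
    -- (CCP3)
    (hCCP3 : ∀ a : A,
      rTensor A ΔH (φ a) + rTensor A P (ΔA a) - α K H H A (lTensor H φ (φ a))
        - α K H H A (lTensor H γ (P a))
      = τ₁₃ K A H H (rTensor H ψ (ψ a) + rTensor H ρ (P a)
        - α K A H H (lTensor A ΔH (ψ a)) - α K A H H (lTensor A P (ΔA a))))
    -- (CCP4)
    (hCCP4 : ∀ a : A,
      α K H A H (lTensor H ψ (φ a)) + α K H A H (lTensor H ρ (P a))
        - rTensor H φ (ψ a) - rTensor H γ (P a)
      = τ₁₃ K H A H (α K H A H (lTensor H ψ (φ a)) + α K H A H (lTensor H ρ (P a))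
        - rTensor H φ (ψ a) - rTensor H γ (P a)))
    -- (CCP5)
    (hCCP5 : ∀ x : H,
      rTensor H ρ (ΔH x) + rTensor H ψ (ρ x) - α K A H H (lTensor A ΔH (ρ x))
        - α K A H H (lTensor A P (Q x))
      = τ₁₃ K H H A (rTensor A ΔH (γ x) + rTensor A P (Q x)
        - α K H H A (lTensor H φ (γ x)) - α K H H A (lTensor H γ (ΔH x))))
    -- (CCP6)
    (hCCP6 : ∀ x : H,
      rTensor H γ (ΔH x) + rTensor H φ (ρ x)
        - α K H A H (lTensor H ψ (γ x)) - α K H A H (lTensor H ρ (ΔH x))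
      = τ₁₃ K H A H (rTensor H γ (ΔH x) + rTensor H φ (ρ x)
        - α K H A H (lTensor H ψ (γ x)) - α K H A H (lTensor H ρ (ΔH x))))
    -- (CCP7)
    (hCCP7 : ∀ x : H,
      rTensor H ΔA (ρ x) + rTensor H Q (ΔH x) - α K A A H (lTensor A ρ (ρ x))
        - α K A A H (lTensor A ψ (Q x))
      = τ₁₃ K H A A (rTensor A γ (γ x) + rTensor A φ (Q x)
        - α K H A A (lTensor H ΔA (γ x)) - α K H A A (lTensor H Q (ΔH x))))
    -- (CCP8)
    (hCCP8 : ∀ x : H,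
      rTensor A ρ (γ x) + rTensor A ψ (Q x)
        - α K A H A (lTensor A γ (ρ x)) - α K A H A (lTensor A φ (Q x))
      = τ₁₃ K A H A (rTensor A ρ (γ x) + rTensor A ψ (Q x)
        - α K A H A (lTensor A γ (ρ x)) - α K A H A (lTensor A φ (Q x))))
    :
    IsAFCoalgebra (prodComul ΔA ΔH φ ψ ρ γ P Q) := by
  classical
  have S1 : ∀ a : A,
      coassocDefect (prodComul ΔA ΔH φ ψ ρ γ P Q) (inl K A H a)
      = τ₁₃ K (A × H) (A × H) (A × H)
          (coassocDefect (prodComul ΔA ΔH φ ψ ρ γ P Q) (inl K A H a)) := by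
    intro a
    have key1 : coassocDefect (prodComul ΔA ΔH φ ψ ρ γ P Q) (inl K A H a)
        = TensorProduct.map (TensorProduct.map (inl K A H) (inl K A H)) (inl K A H)
            (rTensor A ΔA (ΔA a) - α K A A A (lTensor A ΔA (ΔA a))
              + rTensor A Q (φ a) - α K A A A (lTensor A Q (ψ a)))
          + TensorProduct.map (TensorProduct.map (inr K A H) (inl K A H)) (inl K A H)
            (rTensor A φ (ΔA a) + rTensor A γ (φ a) - α K H A A (lTensor H ΔA (φ a))
              - α K H A A (lTensor H Q (P a)))
          + TensorProduct.map (TensorProduct.map (inl K A H) (inl K A H)) (inr K A H)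
            (rTensor H ΔA (ψ a) + rTensor H Q (P a)
              - α K A A H (lTensor A ψ (ΔA a)) - α K A A H (lTensor A ρ (ψ a)))
          + TensorProduct.map (TensorProduct.map (inl K A H) (inr K A H)) (inl K A H)
            (rTensor A ψ (ΔA a) + rTensor A ρ (φ a)
              - α K A H A (lTensor A φ (ΔA a)) - α K A H A (lTensor A γ (ψ a)))
          + TensorProduct.map (TensorProduct.map (inr K A H) (inr K A H)) (inl K A H)
            (rTensor A ΔH (φ a) + rTensor A P (ΔA a) - α K H H A (lTensor H φ (φ a))
              - α K H H A (lTensor H γ (P a)))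
          + TensorProduct.map (TensorProduct.map (inl K A H) (inr K A H)) (inr K A H)
            (rTensor H ψ (ψ a) + rTensor H ρ (P a)
              - α K A H H (lTensor A ΔH (ψ a)) - α K A H H (lTensor A P (ΔA a)))
          + TensorProduct.map (TensorProduct.map (inr K A H) (inl K A H)) (inr K A H)
            (rTensor H φ (ψ a) + rTensor H γ (P a)
              - α K H A H (lTensor H ψ (φ a)) - α K H A H (lTensor H ρ (P a)))
          + TensorProduct.map (TensorProduct.map (inr K A H) (inr K A H)) (inr K A H)
            (rTensor H ΔH (P a) - α K H H H (lTensor H ΔH (P a))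
              + rTensor H P (ψ a) - α K H H H (lTensor H P (φ a))) := by
      simp only [coassocDefect_apply', comul_inl, map_add,
        expand_r_inl, expand_r_inr, expand_l_inl, expand_l_inr, map_sub]
      abel
    rw [key1]
    simp only [map_add, tau13_nat]
    have h1 : τ₁₃ K H A A
        (rTensor A φ (ΔA a) + rTensor A γ (φ a) - α K H A A (lTensor H ΔA (φ a))
          - α K H A A (lTensor H Q (P a)))
        = rTensor H ΔA (ψ a) + rTensor H Q (P a)
          - α K A A H (lTensor A ψ (ΔA a)) - α K A A H (lTensor A ρ (ψ a)) := by
      rw [hCCP1 a]; exact tau13_invol _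
    have h2 : τ₁₃ K H H A
        (rTensor A ΔH (φ a) + rTensor A P (ΔA a) - α K H H A (lTensor H φ (φ a))
          - α K H H A (lTensor H γ (P a)))
        = rTensor H ψ (ψ a) + rTensor H ρ (P a)
          - α K A H H (lTensor A ΔH (ψ a)) - α K A H H (lTensor A P (ΔA a)) := by
      rw [hCCP3 a]; exact tau13_invol _
    have h4 : τ₁₃ K H A H
        (rTensor H φ (ψ a) + rTensor H γ (P a)
          - α K H A H (lTensor H ψ (φ a)) - α K H A H (lTensor H ρ (P a)))
        = rTensor H φ (ψ a) + rTensor H γ (P a)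
          - α K H A H (lTensor H ψ (φ a)) - α K H A H (lTensor H ρ (P a)) := by
      rw [show rTensor H φ (ψ a) + rTensor H γ (P a)
          - α K H A H (lTensor H ψ (φ a)) - α K H A H (lTensor H ρ (P a))
          = -(α K H A H (lTensor H ψ (φ a)) + α K H A H (lTensor H ρ (P a))
            - rTensor H φ (ψ a) - rTensor H γ (P a)) from by abel]
      rw [map_neg, ← hCCP4 a]
    rw [← hCC8 a, ← hCCP2 a, ← hCC3 a, ← hCCP1 a, ← hCCP3 a, h1, h2, h4]
    abel
  have S2 : ∀ x : H,
      coassocDefect (prodComul ΔA ΔH φ ψ ρ γ P Q) (inr K A H x)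
      = τ₁₃ K (A × H) (A × H) (A × H)
          (coassocDefect (prodComul ΔA ΔH φ ψ ρ γ P Q) (inr K A H x)) := by
    intro x
    have key2 : coassocDefect (prodComul ΔA ΔH φ ψ ρ γ P Q) (inr K A H x)
        = TensorProduct.map (TensorProduct.map (inl K A H) (inl K A H)) (inl K A H)
            (rTensor A ΔA (Q x) - α K A A A (lTensor A ΔA (Q x))
              + rTensor A Q (γ x) - α K A A A (lTensor A Q (ρ x)))
          + TensorProduct.map (TensorProduct.map (inr K A H) (inr K A H)) (inr K A H)
            (rTensor H ΔH (ΔH x) - α K H H H (lTensor H ΔH (ΔH x))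
              + rTensor H P (ρ x) - α K H H H (lTensor H P (γ x)))
          + TensorProduct.map (TensorProduct.map (inl K A H) (inr K A H)) (inr K A H)
            (rTensor H ρ (ΔH x) + rTensor H ψ (ρ x) - α K A H H (lTensor A ΔH (ρ x))
              - α K A H H (lTensor A P (Q x)))
          + TensorProduct.map (TensorProduct.map (inr K A H) (inr K A H)) (inl K A H)
            (rTensor A ΔH (γ x) + rTensor A P (Q x)
              - α K H H A (lTensor H φ (γ x)) - α K H H A (lTensor H γ (ΔH x)))
          + TensorProduct.map (TensorProduct.map (inr K A H) (inl K A H)) (inr K A H)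
            (rTensor H γ (ΔH x) + rTensor H φ (ρ x)
              - α K H A H (lTensor H ψ (γ x)) - α K H A H (lTensor H ρ (ΔH x)))
          + TensorProduct.map (TensorProduct.map (inl K A H) (inl K A H)) (inr K A H)
            (rTensor H ΔA (ρ x) + rTensor H Q (ΔH x) - α K A A H (lTensor A ρ (ρ x))
              - α K A A H (lTensor A ψ (Q x)))
          + TensorProduct.map (TensorProduct.map (inr K A H) (inl K A H)) (inl K A H)
            (rTensor A γ (γ x) + rTensor A φ (Q x)
              - α K H A A (lTensor H ΔA (γ x)) - α K H A A (lTensor H Q (ΔH x)))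
          + TensorProduct.map (TensorProduct.map (inl K A H) (inr K A H)) (inl K A H)
            (rTensor A ρ (γ x) + rTensor A ψ (Q x)
              - α K A H A (lTensor A γ (ρ x)) - α K A H A (lTensor A φ (Q x))) := by
      simp only [coassocDefect_apply', comul_inr, map_add,
        expand_r_inl, expand_r_inr, expand_l_inl, expand_l_inr, map_sub]
      abel
    rw [key2]
    simp only [map_add, tau13_nat]
    have h1 : τ₁₃ K A H H
        (rTensor H ρ (ΔH x) + rTensor H ψ (ρ x) - α K A H H (lTensor A ΔH (ρ x))
          - α K A H H (lTensor A P (Q x)))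
        = rTensor A ΔH (γ x) + rTensor A P (Q x)
          - α K H H A (lTensor H φ (γ x)) - α K H H A (lTensor H γ (ΔH x)) := by
      rw [hCCP5 x]; exact tau13_invol _
    have h2 : τ₁₃ K A A H
        (rTensor H ΔA (ρ x) + rTensor H Q (ΔH x) - α K A A H (lTensor A ρ (ρ x))
          - α K A A H (lTensor A ψ (Q x)))
        = rTensor A γ (γ x) + rTensor A φ (Q x)
          - α K H A A (lTensor H ΔA (γ x)) - α K H A A (lTensor H Q (ΔH x)) := by
      rw [hCCP7 x]; exact tau13_invol _
    rw [← hCC4 x, ← hCC7 x, ← hCCP6 x, ← hCCP8 x, ← hCCP5 x, ← hCCP7 x, h1, h2]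
    abel
  intro e
  obtain ⟨a, x⟩ := e
  have he : (⟨a, x⟩ : A × H) = inl K A H a + inr K A H x := by
    simp [Prod.ext_iff]
  rw [he, map_add, map_add, ← S1 a, ← S2 x]
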